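/- arXiv:1207.1882 — 3 statements merged into one kernel-verified Lean document; each statement's English description precedes it below -/
import Mathlib

section
/- For any graph G with chromatic number χ(G) and first Betti number β(G), the inequality (χ(G) - 1)(χ(G) - 2)/2 ≤ β(G) holds; equivalently (2χ(G) - 3)²/8 - 1/8 ≤ β(G). -/
/-!
Let `k = χ(G) ≥ 3`. Since `G` is not `(k-1)`-colourable, greedy colouring must get stuck: some
nonempty vertex set `S` has every vertex with at least `k - 1` neighbours inside `S`, so `|S| ≥ k`.
Handshaking gives at least `|S|(k-1)/2` edges inside `S`, and sending each vertex outside `S` to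
the first edge of a shortest path towards a fixed vertex of `S` injects `V \ S` into the remaining
edges. Hence `β(G) ≥ |S|(k-3)/2 + 1 ≥ k(k-3)/2 + 1 = (k-1)(k-2)/2`.
-/

open Finset

namespace SimpleGraph

variable {V : Type*} {G : SimpleGraph V}

lemma Connected.exists_adj_dist_lt (hG : G.Connected) {u r : V} (h : u ≠ r) :
    ∃ w, G.Adj u w ∧ G.dist w r < G.dist u r := by
  obtain ⟨p, hp⟩ := hG.exists_walk_length_eq_dist u r
  cases p with
  | nil => exact absurd rfl h
  | cons hadj q =>
    refine ⟨_, hadj, ?_⟩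
    have := dist_le q
    rw [Walk.length_cons] at hp
    omega

section

variable [DecidableRel G.Adj]

lemma lt_card_of_forall_le_card_filter_adj {S : Finset V} (hS : S.Nonempty) {k : ℕ}
    (hk : ∀ v ∈ S, k ≤ #{w ∈ S | G.Adj v w}) : k < #S := by
  obtain ⟨v, hv⟩ := hS
  exact (hk v hv).trans_lt (card_lt_card (filter_ssubset.2 ⟨v, hv, G.irrefl⟩))

variable [DecidableEq V]

/-- Greedy colouring: colour `S.erase v` first; its colours on the fewer than `k` neighbours of `v`
leave one of the `k` colours free for `v`. -/
lemma exists_nat_coloring_on_of_forall_exists_card_filter_adj_lt {k : ℕ}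
    (h : ∀ S : Finset V, S.Nonempty → ∃ v ∈ S, #{w ∈ S | G.Adj v w} < k) (S : Finset V) :
    ∃ c : V → ℕ, (∀ v ∈ S, c v < k) ∧ ∀ v ∈ S, ∀ w ∈ S, G.Adj v w → c v ≠ c w := by
  induction S using Finset.strongInduction with | H S ih => ?_
  rcases S.eq_empty_or_nonempty with rfl | hS
  · exact ⟨0, by simp, by simp⟩
  obtain ⟨v, hv, hdeg⟩ := h S hS
  obtain ⟨c, hlt, hproper⟩ := ih (S.erase v) (erase_ssubset hv)
  obtain ⟨j, hj, hjc⟩ := exists_mem_notMem_of_card_lt_card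
    (s := image c {w ∈ S | G.Adj v w}) (t := range k) (by grw [card_image_le, card_range]; exact hdeg)
  have hfree : ∀ w ∈ S, G.Adj v w → c w ≠ j := fun w hw hvw hcw =>
    hjc (mem_image.2 ⟨w, mem_filter.2 ⟨hw, hvw⟩, hcw⟩)
  refine ⟨Function.update c v j, fun u hu => ?_, fun u hu w hw huw => ?_⟩
  · rcases eq_or_ne u v with rfl | huv
    · simpa using hj
    · simpa [huv] using hlt u (mem_erase.2 ⟨huv, hu⟩)
  rcases eq_or_ne u v with rfl | huv
  · simpa [(G.ne_of_adj huw).symm] using (hfree w hw huw).symm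
  rcases eq_or_ne w v with rfl | hwv
  · simpa [huv] using hfree u hu huw.symm
  simpa [huv, hwv] using hproper u (mem_erase.2 ⟨huv, hu⟩) w (mem_erase.2 ⟨hwv, hw⟩) huw

end

variable [Fintype V] [DecidableRel G.Adj]

def cycleRank (G : SimpleGraph V) [Fintype G.edgeSet] : ℤ :=
  #G.edgeFinset - Fintype.card V + 1

lemma Connected.cycleRank_nonneg (hG : G.Connected) : 0 ≤ G.cycleRank := by
  have := hG.card_vert_le_card_edgeSet_add_one
  rw [Nat.card_eq_fintype_card, Nat.card_eq_fintype_card, ← edgeFinset_card] at this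
  unfold cycleRank
  omega

variable [DecidableEq V]

lemma exists_forall_le_card_filter_adj_of_not_colorable {k : ℕ} (h : ¬ G.Colorable k) :
    ∃ S : Finset V, S.Nonempty ∧ ∀ v ∈ S, k ≤ #{w ∈ S | G.Adj v w} := by
  contrapose! h
  obtain ⟨c, hlt, hproper⟩ := exists_nat_coloring_on_of_forall_exists_card_filter_adj_lt h univ
  exact (colorable_iff_exists_bdd_nat_coloring k).2
    ⟨.mk c fun huw => hproper _ (mem_univ _) _ (mem_univ _) huw, fun v => hlt v (mem_univ v)⟩

lemma sum_card_filter_adj_eq_two_mul_card_edgeFinset_inter_sym2 (s : Set V)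
    [DecidablePred (· ∈ s)] :
    ∑ v ∈ s.toFinset, #{w ∈ s.toFinset | G.Adj v w} = 2 * #(G.edgeFinset ∩ s.toFinset.sym2) := by
  rw [← map_edgeFinset_induce, card_map, ← sum_degrees_eq_twice_card_edges, ← sum_set_coe]
  refine sum_congr rfl fun v _ => ?_
  rw [← card_neighborFinset_eq_degree, ← card_map (.subtype (· ∈ s)), map_neighborFinset_induce]
  congr 1; ext; simp [and_comm]

/-- Each `u ∉ S` is sent to the first edge of a shortest path from `u` to a fixed `r ∈ S`; two
vertices sent to the same edge would each be strictly closer to `r` than the other. -/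
lemma Connected.card_compl_le_card_edgeFinset_sdiff_sym2 (hG : G.Connected) {S : Finset V}
    (hS : S.Nonempty) : #Sᶜ ≤ #(G.edgeFinset \ S.sym2) := by
  obtain ⟨r, hr⟩ := hS
  choose! f hadj hdist using fun u (hu : u ≠ r) => hG.exists_adj_dist_lt hu
  have hne : ∀ u ∈ Sᶜ, u ≠ r := fun u hu h => mem_compl.1 hu (h ▸ hr)
  refine card_le_card_of_injOn (fun u => s(u, f u)) (fun u hu => ?_) (fun u₁ hu₁ u₂ hu₂ heq => ?_)
  · simp only [coe_sdiff, Set.mem_sdiff, mem_coe, mem_edgeFinset, mem_edgeSet, mk_mem_sym2_iff]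
    exact ⟨hadj u (hne u hu), fun h => mem_compl.1 hu h.1⟩
  rcases Sym2.eq_iff.1 heq with ⟨h, -⟩ | ⟨h₁, h₂⟩
  · exact h
  have d₁ := hdist u₁ (hne u₁ hu₁)
  have d₂ := hdist u₂ (hne u₂ hu₂)
  rw [h₂] at d₁
  rw [← h₁] at d₂
  omega

lemma Connected.card_mul_sub_two_add_two_le_two_mul_cycleRank (hG : G.Connected) {S : Finset V}
    (hS : S.Nonempty) {k : ℕ} (hk : ∀ v ∈ S, k ≤ #{w ∈ S | G.Adj v w}) :
    #S * ((k : ℤ) - 2) + 2 ≤ 2 * G.cycleRank := by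
  have hhandshake : ∑ v ∈ S, #{w ∈ S | G.Adj v w} = 2 * #(G.edgeFinset ∩ S.sym2) := by
    simpa using sum_card_filter_adj_eq_two_mul_card_edgeFinset_inter_sym2 (G := G) (S : Set V)
  have hin : #S * k ≤ 2 * #(G.edgeFinset ∩ S.sym2) := by
    rw [← hhandshake, ← smul_eq_mul]
    exact card_nsmul_le_sum S _ k hk
  have hout := hG.card_compl_le_card_edgeFinset_sdiff_sym2 hS
  have hsplit := card_inter_add_card_sdiff G.edgeFinset S.sym2
  have hcompl := card_compl_add_card S
  unfold cycleRank
  zify at *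
  linarith

end SimpleGraph

open scoped Classical in
/-- For any connected graph `G`, `(χ(G)-1)(χ(G)-2)/2 ≤ β(G)`. -/
theorem chromatic_betti_bound {V : Type*} [Fintype V] (G : SimpleGraph V)
    (hG : G.Connected) (n : ℕ) (hn : G.chromaticNumber = n) :
    ((n : ℤ) - 1) * ((n : ℤ) - 2) / 2 ≤
      (G.edgeFinset.card : ℤ) - Fintype.card V + 1 := by
  have hn0 : n ≠ 0 := by
    rintro rfl
    exact (SimpleGraph.chromaticNumber_eq_zero_iff.1 (mod_cast hn)).elim hG.nonempty.some
  refine Int.ediv_le_of_le_mul two_pos ?_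
  change _ ≤ G.cycleRank * 2
  rcases le_or_gt n 2 with hn2 | hn3
  · nlinarith [hG.cycleRank_nonneg, show (1 : ℤ) ≤ n by omega, show (n : ℤ) ≤ 2 by omega]
  have hcol : ¬ G.Colorable (n - 1) := fun h => by
    have := h.chromaticNumber_le
    rw [hn, Nat.cast_le] at this
    omega
  obtain ⟨S, hS, hdeg⟩ := SimpleGraph.exists_forall_le_card_filter_adj_of_not_colorable hcol
  have hSn := SimpleGraph.lt_card_of_forall_le_card_filter_adj hS hdeg
  have hβS := hG.card_mul_sub_two_add_two_le_two_mul_cycleRank hS hdeg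
  push_cast [Nat.one_le_iff_ne_zero.2 hn0] at hβS
  have : (n : ℤ) ≤ #S := by omega
  nlinarith
end

section
/- The maximum chromatic number among connected graphs with first Betti number at most g is attained by the largest complete graph K_n with β(K_n) = (n-1)(n-2)/2 ≤ g; that maximum equals n = ⌊(3 + √(8g+1))/2⌋. -/
/-!
Deleting a vertex `v` of degree `< m` from a graph that is not `m`-colourable leaves a graph that
is still not `m`-colourable, and it does not increase `β = |E| - |V| + c`: we lose `deg v` edges
and one vertex, while the component of `v` splits into at most `deg v` pieces. Repeating this we
reach a graph of minimum degree `≥ m`, hence with more than `m` vertices, for which the handshake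
lemma gives `2β ≥ (m - 2)|V| + 2 ≥ m(m - 1)`. With `m = χ - 1` this is `(χ-1)(χ-2)/2 ≤ β`, and
`K_n` attains it; solving `(n-1)(n-2) ≤ 2g` for `n` yields the floor.
-/

open Finset SimpleGraph

theorem Nat.card_compl_singleton_add_one {α : Type*} [Finite α] (a : α) :
    Nat.card ({a}ᶜ : Set α) + 1 = Nat.card α := by
  have : Nonempty α := ⟨a⟩
  rw [Nat.card_coe_set_eq, Set.ncard_compl, Set.ncard_singleton, Nat.sub_add_cancel Nat.card_pos]

namespace SimpleGraph

variable {V : Type*} (G : SimpleGraph V)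

/-- The first Betti number `β(G) = |E| - |V| + c(G)`, with `c(G)` the number of components. -/
noncomputable def cyclomaticNumber : ℤ :=
  Nat.card G.edgeSet - Nat.card V + Nat.card G.ConnectedComponent

variable {G}

theorem reachable_induce_compl_singleton_of_not_reachable {v : V} {x y : ({v}ᶜ : Set V)}
    (hxy : G.Reachable x y) (hxv : ¬G.Reachable x v) : (G.induce {v}ᶜ).Reachable x y := by
  obtain ⟨w⟩ := hxy
  have hw : ∀ z ∈ w.support, z ∈ ({v}ᶜ : Set V) := by
    classical
    rintro z hz rfl
    exact hxv ⟨w.takeUntil _ hz⟩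
  exact ⟨w.induce _ hw⟩

theorem exists_adj_reachable_induce_compl_singleton {v : V} {x : ({v}ᶜ : Set V)}
    (h : G.Reachable v x) : ∃ u : ({v}ᶜ : Set V), G.Adj v u ∧ (G.induce {v}ᶜ).Reachable u x := by
  obtain ⟨x, hx⟩ := x
  have h : G.Reachable v x := h
  obtain ⟨p, hp⟩ := h.exists_isPath
  cases p with
  | nil => exact absurd rfl hx
  | cons hadj q =>
    have hq : ∀ z ∈ q.support, z ∈ ({v}ᶜ : Set V) := by
      rintro z hz rfl
      exact ((Walk.cons_isPath_iff _ _).1 hp).2 hz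
    exact ⟨⟨_, hq _ q.start_mem_support⟩, hadj, ⟨q.induce _ hq⟩⟩

variable (G) in
theorem card_connectedComponent_induce_compl_singleton_add_one_le [Fintype V] [DecidableRel G.Adj]
    (v : V) :
    Nat.card (G.induce {v}ᶜ).ConnectedComponent + 1 ≤
      Nat.card G.ConnectedComponent + G.degree v := by
  classical
  choose nb hadj hreach using fun (C : (G.induce {v}ᶜ).ConnectedComponent)
    (h : G.Reachable v C.out) => exists_adj_reachable_induce_compl_singleton h
  -- A component of `G - v` inside the component of `v` is recorded by a neighbour of `v` in it;
  -- the others embed into the components of `G` other than that of `v`, which `none` takes.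
  let f : Option (G.induce {v}ᶜ).ConnectedComponent → G.ConnectedComponent ⊕ G.neighborSet v
    | none => .inl (G.connectedComponentMk v)
    | some C => if h : G.Reachable v C.out then .inr ⟨nb C h, hadj C h⟩
        else .inl (G.connectedComponentMk C.out)
  have hf : f.Injective := by
    have hmk (C : (G.induce {v}ᶜ).ConnectedComponent) {u} (hu : (G.induce {v}ᶜ).Reachable u C.out) :
        (G.induce {v}ᶜ).connectedComponentMk u = C :=
      (ConnectedComponent.sound hu).trans C.out_eq
    rintro (_ | C₁) (_ | C₂) h
    · rfl
    · by_cases h₂ : G.Reachable v C₂.out <;>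
        simp only [f, h₂, dite_true, dite_false, reduceCtorEq, Sum.inl.injEq] at h
      exact absurd (ConnectedComponent.exact h) h₂
    · by_cases h₁ : G.Reachable v C₁.out <;>
        simp only [f, h₁, dite_true, dite_false, reduceCtorEq, Sum.inl.injEq] at h
      exact absurd (ConnectedComponent.exact h.symm) h₁
    · by_cases h₁ : G.Reachable v C₁.out <;> by_cases h₂ : G.Reachable v C₂.out <;>
        simp only [f, h₁, h₂, dite_true, dite_false, reduceCtorEq, Sum.inl.injEq,
          Sum.inr.injEq] at h
      · have hnb : nb C₁ h₁ = nb C₂ h₂ := Subtype.ext (Subtype.mk.inj h)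
        rw [← hmk C₁ (hreach C₁ h₁), ← hmk C₂ (hreach C₂ h₂), hnb]
      · have h' := reachable_induce_compl_singleton_of_not_reachable
          (ConnectedComponent.exact h) fun h' => h₁ h'.symm
        rw [← hmk C₁ .rfl, ← hmk C₂ h']
  have := Nat.card_le_card_of_injective f hf
  rwa [Nat.card_sum, Finite.card_option, Nat.card_eq_fintype_card (α := G.neighborSet v),
    card_neighborSet_eq_degree] at this

theorem Colorable.of_induce_compl_singleton [Fintype V] [DecidableRel G.Adj] {v : V} {n : ℕ}
    (h : (G.induce {v}ᶜ).Colorable n) (hv : G.degree v < n) : G.Colorable n := by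
  classical
  obtain ⟨C⟩ := h
  let neighborColors : Finset (Fin n) := (G.neighborFinset v).attach.image
    fun u : {u // u ∈ G.neighborFinset v} =>
      C ⟨u, (G.ne_of_adj ((G.mem_neighborFinset v u).1 u.2)).symm⟩
  have hcard : #neighborColors < #(univ : Finset (Fin n)) := by
    rw [card_univ, Fintype.card_fin]
    exact card_image_le.trans_lt (by rwa [card_attach, card_neighborFinset_eq_degree])
  obtain ⟨c, -, hc⟩ := exists_mem_notMem_of_card_lt_card hcard
  have hc' {u : V} (hu : G.Adj v u) : C ⟨u, (G.ne_of_adj hu).symm⟩ ≠ c := fun h =>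
    hc (mem_image.2 ⟨⟨u, (G.mem_neighborFinset v u).2 hu⟩, mem_attach _ _, h⟩)
  refine ⟨Coloring.mk (fun u => if hu : u = v then c else C ⟨u, hu⟩) fun {a b} hab => ?_⟩
  rcases eq_or_ne v a with rfl | ha <;> rcases eq_or_ne v b with rfl | hb
  · exact absurd hab (G.irrefl)
  · simpa [hb.symm] using (hc' hab).symm
  · simpa [ha.symm] using hc' hab.symm
  · simpa [ha.symm, hb.symm] using
      C.valid (v := ⟨a, ha.symm⟩) (w := ⟨b, hb.symm⟩) (by simpa using hab)

variable (G) in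
theorem cyclomaticNumber_induce_compl_singleton_le [Fintype V] (v : V) :
    (G.induce {v}ᶜ).cyclomaticNumber ≤ G.cyclomaticNumber := by
  classical
  have hE := G.card_edgeFinset_induce_compl_singleton v
  rw [edgeFinset_deleteIncidenceSet_eq_sdiff, card_sdiff_of_subset (G.incidenceFinset_subset v),
    card_incidenceFinset_eq_degree] at hE
  have hdeg := G.degree_le_card_edgeFinset v
  have hV := Nat.card_compl_singleton_add_one v
  have hC := G.card_connectedComponent_induce_compl_singleton_add_one_le v
  simp only [cyclomaticNumber, Nat.card_eq_fintype_card, ← edgeFinset_card] at *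
  omega

theorem mul_sub_one_le_two_mul_cyclomaticNumber_of_le_degree [Fintype V] [DecidableRel G.Adj]
    [Nonempty V] {m : ℕ} (hm : 2 ≤ m) (hdeg : ∀ v, m ≤ G.degree v) :
    (m : ℤ) * (m - 1) ≤ 2 * G.cyclomaticNumber := by
  obtain ⟨v⟩ := ‹Nonempty V›
  have hV : m < Fintype.card V := (hdeg v).trans_lt (G.degree_lt_card_verts v)
  have hE : m * Fintype.card V ≤ 2 * #G.edgeFinset := by
    rw [← G.sum_degrees_eq_twice_card_edges, mul_comm, ← smul_eq_mul, ← Finset.card_univ,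
      ← Finset.sum_const]
    exact Finset.sum_le_sum fun u _ => hdeg u
  have hC : 0 < Nat.card G.ConnectedComponent := Nat.card_pos
  simp only [cyclomaticNumber, Nat.card_eq_fintype_card, ← edgeFinset_card] at hC ⊢
  zify at hE hV hm hC
  nlinarith [mul_le_mul_of_nonneg_left hV.le (sub_nonneg.2 hm)]

theorem mul_sub_one_le_two_mul_cyclomaticNumber [Finite V] {m : ℕ} (hm : 2 ≤ m)
    (h : ¬G.Colorable m) : (m : ℤ) * (m - 1) ≤ 2 * G.cyclomaticNumber := by
  induction hV : Nat.card V generalizing V with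
  | zero =>
    have : IsEmpty V := (Nat.card_eq_zero.1 hV).resolve_right (not_infinite_iff_finite.2 ‹_›)
    exact absurd (Colorable.of_isEmpty m) h
  | succ n ih =>
    classical
    have := Fintype.ofFinite V
    have : Nonempty V := Nat.card_pos_iff.1 (by omega) |>.1
    by_cases hdeg : ∃ v, G.degree v < m
    · obtain ⟨v, hv⟩ := hdeg
      have hV' : Nat.card ({v}ᶜ : Set V) = n := by
        have := Nat.card_compl_singleton_add_one v
        omega
      exact (ih (fun h' => h (h'.of_induce_compl_singleton hv)) hV').trans
        (by gcongr; exact G.cyclomaticNumber_induce_compl_singleton_le v)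
    · simp only [not_exists, not_lt] at hdeg
      exact G.mul_sub_one_le_two_mul_cyclomaticNumber_of_le_degree hm hdeg

theorem sub_one_mul_sub_two_le_two_mul_cyclomaticNumber [Finite V] {k : ℕ} (hk : 3 ≤ k)
    (hχ : G.chromaticNumber = k) : ((k : ℤ) - 1) * (k - 2) ≤ 2 * G.cyclomaticNumber := by
  have hcol : ¬G.Colorable (k - 1) := fun h => by
    have := h.chromaticNumber_le
    rw [hχ, Nat.cast_le] at this
    omega
  have := G.mul_sub_one_le_two_mul_cyclomaticNumber (by omega) hcol
  push_cast [Nat.cast_sub (by omega : 1 ≤ k)] at this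
  linarith

theorem Connected.cyclomaticNumber_eq [Fintype V] [Fintype G.edgeSet] (hG : G.Connected) :
    G.cyclomaticNumber = #G.edgeFinset - Fintype.card V + 1 := by
  have : Nat.card G.ConnectedComponent = 1 :=
    Nat.card_eq_one_iff_unique.2 ⟨hG.preconnected.subsingleton_connectedComponent,
      hG.nonempty.map G.connectedComponentMk⟩
  rw [cyclomaticNumber, this, edgeFinset_card, Nat.card_eq_fintype_card, Nat.card_eq_fintype_card,
    Nat.cast_one]

theorem two_mul_cyclomaticNumber_top [Fintype V] [Nonempty V] :
    2 * (⊤ : SimpleGraph V).cyclomaticNumber = (Fintype.card V - 1) * (Fintype.card V - 2) := by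
  classical
  rw [connected_top.cyclomaticNumber_eq, card_edgeFinset_top_eq_card_choose_two]
  have := Nat.cast_choose_two ℚ (Fintype.card V)
  qify
  linear_combination 2 * this

end SimpleGraph

theorem le_floor_three_add_sqrt_div_two_iff (g : ℕ) {k : ℕ} (hk : 2 ≤ k) :
    (k : ℤ) ≤ ⌊(3 + √(8 * g + 1)) / 2⌋ ↔ ((k : ℤ) - 1) * (k - 2) ≤ 2 * g := by
  have hk' : (0 : ℝ) ≤ 2 * k - 3 := by
    have : (2 : ℝ) ≤ k := by exact_mod_cast hk
    linarith
  rw [Int.le_floor, ← Int.cast_le (R := ℝ)]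
  push_cast
  calc (k : ℝ) ≤ (3 + √(8 * g + 1)) / 2 ↔ 2 * k - 3 ≤ √(8 * g + 1) := by
        constructor <;> intro h <;> linarith
    _ ↔ (2 * (k : ℝ) - 3) ^ 2 ≤ 8 * g + 1 := Real.le_sqrt hk' (by positivity)
    _ ↔ ((k : ℝ) - 1) * (k - 2) ≤ 2 * g := by
        constructor <;> intro h <;> linarith

/-- The maximum chromatic number among connected graphs with first Betti number at most `g`
equals `⌊(3 + √(8g+1))/2⌋`, attained by the largest complete graph `K_n` with `β(K_n) ≤ g`. -/
theorem max_chromatic_given_betti (g : ℕ) :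
    IsGreatest {n : ℕ | ∃ (V : Type) (_ : Fintype V) (G : SimpleGraph V)
        (_ : Fintype G.edgeSet), G.Connected ∧
        (G.edgeFinset.card : ℤ) - Fintype.card V + 1 ≤ g ∧
        G.chromaticNumber = n}
      (⌊(3 + Real.sqrt (8 * g + 1)) / 2⌋.toNat) := by
  have h2 := (le_floor_three_add_sqrt_div_two_iff g le_rfl).2 (by simp)
  obtain ⟨n, hn⟩ := Int.eq_ofNat_of_zero_le (h2.trans' zero_le_two)
  rw [hn, Int.toNat_natCast]
  have : Nonempty (Fin n) := ⟨⟨0, by omega⟩⟩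
  refine ⟨⟨Fin n, inferInstance, ⊤, inferInstance, connected_top, ?_, ?_⟩, ?_⟩
  · have hβ := two_mul_cyclomaticNumber_top (V := Fin n)
    have hn' := (le_floor_three_add_sqrt_div_two_iff g (k := n) (by omega)).1 hn.ge
    rw [connected_top.cyclomaticNumber_eq, Fintype.card_fin] at hβ
    rw [Fintype.card_fin]
    linarith
  · rw [chromaticNumber_top, Fintype.card_fin]
  · rintro k ⟨V, _, G, _, hG, hβ, hχ⟩
    obtain hk | hk := le_or_gt k 2
    · omega
    have hkβ := G.sub_one_mul_sub_two_le_two_mul_cyclomaticNumber hk hχ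
    rw [hG.cyclomaticNumber_eq] at hkβ
    have := (le_floor_three_add_sqrt_div_two_iff g hk.le).2 (by linarith)
    omega
end

section
/- For integers p ≥ 4m + 4 with m ≥ 0, letting g = (p-1)(p-2)/2 - m, we have ⌈(5 + √(32g - 7))/2⌉ = 2p. -/
/-- For `p ≥ 4m + 4` and `g = (p-1)(p-2)/2 - m`, we have `⌈(5 + √(32g-7))/2⌉ = 2p`. -/
theorem ceil_eq_two_p_minus (p m g : ℤ) (hm : 0 ≤ m) (hp : 4 * m + 4 ≤ p)
    (hg : g = (p - 1) * (p - 2) / 2 - m) :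
    ⌈(5 + Real.sqrt (32 * g - 7)) / 2⌉ = 2 * p := by
  have hev : (2:ℤ) ∣ (p - 1) * (p - 2) := by
    have h := Int.even_mul_succ_self (p - 2)
    have h2 : Even ((p - 1) * (p - 2)) := by
      rw [mul_comm]
      ring_nf; ring_nf at h; exact h
    exact h2.two_dvd
  have hgz : 32 * g - 7 = 16 * p ^ 2 - 48 * p + 25 - 32 * m := by
    rw [hg]; nlinarith [Int.ediv_mul_cancel hev]
  have hD : ((32:ℝ) * g - 7) = 16 * (p:ℝ) ^ 2 - 48 * p + 25 - 32 * m := by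
    have h := congrArg (fun z : ℤ => (z : ℝ)) hgz
    push_cast at h
    linarith
  rw [hD]
  have hpR : (4:ℝ) * m + 4 ≤ p := by exact_mod_cast hp
  have hmR : (0:ℝ) ≤ m := by exact_mod_cast hm
  have hupper : Real.sqrt (16 * (p:ℝ) ^ 2 - 48 * p + 25 - 32 * m) ≤ 4 * p - 5 := by
    have h1 : 16 * (p:ℝ) ^ 2 - 48 * p + 25 - 32 * m ≤ (4 * (p:ℝ) - 5) ^ 2 := by nlinarith
    have h2 : (0:ℝ) ≤ 4 * p - 5 := by nlinarith
    calc Real.sqrt (16 * (p:ℝ) ^ 2 - 48 * p + 25 - 32 * m)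
        ≤ Real.sqrt ((4 * (p:ℝ) - 5) ^ 2) := Real.sqrt_le_sqrt h1
      _ = 4 * p - 5 := by rw [Real.sqrt_sq h2]
  have hlower : (4 * (p:ℝ) - 7) < Real.sqrt (16 * (p:ℝ) ^ 2 - 48 * p + 25 - 32 * m) := by
    have h1 : (4 * (p:ℝ) - 7) ^ 2 < 16 * (p:ℝ) ^ 2 - 48 * p + 25 - 32 * m := by nlinarith
    exact (Real.lt_sqrt (by nlinarith)).mpr h1
  rw [Int.ceil_eq_iff]
  constructor
  · push_cast; nlinarith
  · push_cast; nlinarith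
end
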